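/- arXiv:2207.05590 — 3 statements merged into one kernel-verified Lean document; each statement's English description precedes it below -/
import Mathlib

section
/- Let G' = (V, E') be a finite simple graph, p a positive natural number, and x : V → {0,1} with Σ_{v∈V} x_v = p. For each j ∈ V let Q_j = {k ∈ V : (j,k) ∈ E'}. Then x satisfies p·(1 − x_j) ≥ Σ_{k∈Q_j} x_k for all j ∈ V if and only if the support of x is an independent set of G'. -/
def SimpleGraph.IsIndep {V : Type*} (G : SimpleGraph V) (S : Set V) : Prop :=
  ∀ a ∈ S, ∀ b ∈ S, ¬ G.Adj a b

theorem Finset.sum_le_mul_one_sub_iff {ι : Type*} (s : Finset ι) (x : ι → ℕ) {p a : ℕ}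
    (hs : ∑ k ∈ s, x k ≤ p) (ha : a ≤ 1) :
    ∑ k ∈ s, x k ≤ p * (1 - a) ↔ (a = 1 → ∀ k ∈ s, x k = 0) := by
  interval_cases a
  · simpa using hs
  · simp [Finset.sum_eq_zero_iff]

namespace SimpleGraph

theorem isIndep_setOf_eq_one_iff {V : Type*} [Fintype V] (G : SimpleGraph V) [DecidableRel G.Adj]
    {x : V → ℕ} (hx : ∀ v, x v ≤ 1) :
    G.IsIndep {v | x v = 1} ↔ ∀ j, x j = 1 → ∀ k ∈ G.neighborFinset j, x k = 0 := by
  have h01 : ∀ k, x k = 0 ↔ ¬ x k = 1 := fun k => by have := hx k; omega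
  simp only [IsIndep, Set.mem_ofPred_eq, mem_neighborFinset, h01]
  exact forall₂_congr fun a _ => ⟨fun h b hab hb => h b hb hab, fun h b hb hab => h b hab hb⟩

end SimpleGraph

theorem stmt_1_general {V : Type*} [Fintype V] (G : SimpleGraph V) [DecidableRel G.Adj]
    (p : ℕ) (x : V → ℕ) (hx : ∀ v, x v ≤ 1)
    (hsum : ∑ v, x v = p) :
    (∀ j, ∑ k ∈ G.neighborFinset j, x k ≤ p * (1 - x j)) ↔
      G.IsIndep {v | x v = 1} := by
  have hle : ∀ j, ∑ k ∈ G.neighborFinset j, x k ≤ p := fun j =>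
    hsum ▸ Finset.sum_le_sum_of_subset (Finset.subset_univ _)
  rw [G.isIndep_setOf_eq_one_iff hx]
  exact forall_congr' fun j => Finset.sum_le_mul_one_sub_iff _ x (hle j) (hx j)

theorem stmt_1 {V : Type*} [Fintype V] (G : SimpleGraph V) [DecidableRel G.Adj]
    (p : ℕ) (hp : 0 < p) (x : V → ℕ) (hx : ∀ v, x v ≤ 1)
    (hsum : ∑ v, x v = p) :
    (∀ j, ∑ k ∈ G.neighborFinset j, x k ≤ p * (1 - x j)) ↔
      G.IsIndep {v | x v = 1} :=
  stmt_1_general G p x hx hsum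
end

section
/- Let G' = (V, E') be a finite simple graph and x : V → {0,1} whose support S is an independent set of G' with |S| ≤ p. For each j ∈ V, let Q_j be the neighborhood of j in G', let q_j be the maximum size of an independent set in the subgraph of G' induced by Q_j ∪ {j}, and let n_j = min(p, q_j). Then x satisfies n_j·(1 − x_j) ≥ Σ_{k∈Q_j} x_k for every j ∈ V. -/
/-
If `x j = 1`, independence of the support forces `x` to vanish on the neighbourhood of `j`, so both
sides are `0`. If `x j = 0`, the neighbours of `j` in the support form an independent subset of the
closed neighbourhood of `j`, so their number is at most `q j`; it is also at most `∑ v, x v ≤ p`.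
-/

namespace SimpleGraph

variable {V : Type*} (G : SimpleGraph V)

lemma IsIndep.mono {S T : Set V} (hT : G.IsIndep T) (hST : S ⊆ T) : G.IsIndep S :=
  fun a ha b hb => hT a (hST ha) b (hST hb)

variable [Fintype V] [DecidableRel G.Adj]

lemma sum_neighborFinset_eq_zero_of_isIndep_support {x : V → ℕ} (hx : ∀ v, x v ≤ 1)
    (hind : G.IsIndep {v | x v = 1}) {j : V} (hj : x j = 1) :
    ∑ k ∈ G.neighborFinset j, x k = 0 := by
  refine Finset.sum_eq_zero fun k hk => ?_
  rw [mem_neighborFinset] at hk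
  obtain hk0 | hk1 := Nat.le_one_iff_eq_zero_or_eq_one.mp (hx k)
  · exact hk0
  · exact absurd hk (hind j hj k hk1)

lemma sum_neighborFinset_le_of_isIndep_support {x : V → ℕ} (hx : ∀ v, x v ≤ 1)
    (hind : G.IsIndep {v | x v = 1}) (j : V) {m : ℕ}
    (hm : m ∈ upperBounds {n | ∃ t : Finset V, ↑t ⊆ insert j (G.neighborSet j) ∧
        G.IsIndep ↑t ∧ t.card = n}) :
    ∑ k ∈ G.neighborFinset j, x k ≤ m := by
  set t := (G.neighborFinset j).filter (x · = 1)
  have hsum : ∑ k ∈ G.neighborFinset j, x k = t.card := by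
    rw [Finset.card_filter]
    refine Finset.sum_congr rfl fun k _ => ?_
    obtain h | h := Nat.le_one_iff_eq_zero_or_eq_one.mp (hx k) <;> simp [h]
  have hsub : (t : Set V) ⊆ insert j (G.neighborSet j) := fun k hk =>
    Set.mem_insert_of_mem _ ((mem_neighborFinset G j k).mp (Finset.mem_filter.mp hk).1)
  have hindt : G.IsIndep t := hind.mono G fun k hk => (Finset.mem_filter.mp hk).2
  exact hsum ▸ hm ⟨t, hsub, hindt, rfl⟩

end SimpleGraph

theorem stmt_2_general {V : Type*} [Fintype V]
    (G : SimpleGraph V) [DecidableRel G.Adj]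
    (p : ℕ) (x : V → ℕ) (hx : ∀ v, x v ≤ 1)
    (hind : G.IsIndep {v | x v = 1}) (hcard : ∑ v, x v ≤ p)
    (q : V → ℕ)
    (hq : ∀ j, IsGreatest
      {n | ∃ t : Finset V, ↑t ⊆ insert j (G.neighborSet j) ∧
        G.IsIndep ↑t ∧ t.card = n} (q j)) :
    ∀ j, ∑ k ∈ G.neighborFinset j, x k ≤ min p (q j) * (1 - x j) := by
  intro j
  obtain hj | hj := Nat.le_one_iff_eq_zero_or_eq_one.mp (hx j)
  · rw [hj, Nat.sub_zero, mul_one, le_min_iff]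
    exact ⟨(Finset.sum_le_sum_of_subset (Finset.subset_univ _)).trans hcard,
      G.sum_neighborFinset_le_of_isIndep_support hx hind j (hq j).2⟩
  · rw [G.sum_neighborFinset_eq_zero_of_isIndep_support hx hind hj]
    exact Nat.zero_le _

theorem stmt_2 {V : Type*} [Fintype V] [DecidableEq V]
    (G : SimpleGraph V) [DecidableRel G.Adj]
    (p : ℕ) (x : V → ℕ) (hx : ∀ v, x v ≤ 1)
    (hind : G.IsIndep {v | x v = 1}) (hcard : ∑ v, x v ≤ p)
    (q : V → ℕ)
    (hq : ∀ j, IsGreatest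
      {n | ∃ t : Finset V, ↑t ⊆ insert j (G.neighborSet j) ∧
        G.IsIndep ↑t ∧ t.card = n} (q j)) :
    ∀ j, ∑ k ∈ G.neighborFinset j, x k ≤ min p (q j) * (1 - x j) :=
  stmt_2_general G p x hx hind hcard q hq
end

section
/- Let I, J be finite sets with |J| ≥ p ≥ 1, and s : I × J → ℝ. For each client i ∈ I let F_i ⊆ J be the set obtained from J by removing some set of p − 1 sites that maximize s_{i,·} (the p − 1 'furthest' sites from i). Then for every S ⊆ J with |S| = p and every i ∈ I, we have min_{j∈S} s_{ij} = min_{j∈S∩F_i} s_{ij}; in particular S ∩ F_i ≠ ∅ and restricting assignments to F_i does not change the p-median objective value. -/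
/-! Of the `p` elements of `S`, at most `p - 1` lie in the removed set `D i`, so some `k ∈ S` survives
in `F i`. Every removed `j ∈ S` is at least as far as `k`, so it never attains the minimum over `S`. -/

theorem Finset.inf'_eq_inf'_of_subset_of_forall_exists_le {α β : Type*} [SemilatticeInf α]
    {S T : Finset β} (hTS : T ⊆ S) (hT : T.Nonempty) {f : β → α}
    (hdom : ∀ j ∈ S, ∃ k ∈ T, f k ≤ f j) :
    S.inf' (hT.mono hTS) f = T.inf' hT f := by
  refine le_antisymm (Finset.le_inf' _ _ fun k hk => Finset.inf'_le _ (hTS hk)) ?_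
  refine Finset.le_inf' _ _ fun j hj => ?_
  obtain ⟨k, hk, hkj⟩ := hdom j hj
  exact (Finset.inf'_le _ hk).trans hkj

theorem stmt_9 {I J : Type*} [Fintype J] [DecidableEq J]
    (p : ℕ) (hp : 1 ≤ p)
    (s : I × J → ℝ)
    (D : I → Finset J) (hDcard : ∀ i, (D i).card = p - 1)
    (hDmax : ∀ i, ∀ j ∈ D i, ∀ k ∉ D i, s (i, k) ≤ s (i, j))
    (F : I → Finset J) (hF : ∀ i, F i = Finset.univ \ D i)
    (S : Finset J) (hScard : S.card = p) (i : I) :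
    ∃ hne : (S ∩ F i).Nonempty,
      S.inf' (Finset.card_pos.mp (by omega)) (fun j => s (i, j)) =
        (S ∩ F i).inf' hne (fun j => s (i, j)) := by
  obtain ⟨k, hkS, hkD⟩ :=
    Finset.exists_mem_notMem_of_card_lt_card (show (D i).card < S.card by grind)
  have hk : k ∈ S ∩ F i := by simp [hF, hkS, hkD]
  refine ⟨⟨k, hk⟩, Finset.inf'_eq_inf'_of_subset_of_forall_exists_le
    Finset.inter_subset_left _ fun j hj => ?_⟩
  by_cases hjD : j ∈ D i
  · exact ⟨k, hk, hDmax i j hjD k hkD⟩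
  · exact ⟨j, by simp [hF, hj, hjD], le_rfl⟩
end
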